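/- With the construction data as in the context, for every N ≥ 1 the family (X_N^{(1)},…,X_N^{(ℓ)}) of columns of the block matrix (θ^⌊α^N⌋ I_ℓ ; F_N) is a ℤ-basis of the lattice B_N ∩ ℤ^{2ℓ}; consequently H(B_N) = ‖X_N^{(1)} ∧ ⋯ ∧ X_N^{(ℓ)}‖, and there exist a constant c̃ > 0 (depending only on the construction data, not on N) and N₀ such that H(B_N) ≥ c̃·(θ^⌊α^N⌋)^ℓ for all N ≥ N₀. -/

import Mathlib

open scoped BigOperators ENNReal

noncomputable section

/-- A vector of `ℝⁿ` has rational coordinates. -/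
def IsRatVec {n : ℕ} (v : EuclideanSpace ℝ (Fin n)) : Prop := ∀ i, ∃ q : ℚ, v i = (q : ℝ)

/-- A vector of `ℝⁿ` has integer coordinates. -/
def IsIntVec {n : ℕ} (v : EuclideanSpace ℝ (Fin n)) : Prop := ∀ i, ∃ z : ℤ, v i = (z : ℝ)

/-- A subspace of `ℝⁿ` is rational if it is spanned by vectors with rational coordinates. -/
def IsRationalSubspace {n : ℕ} (B : Submodule ℝ (EuclideanSpace ℝ (Fin n))) : Prop :=
  ∃ S : Set (EuclideanSpace ℝ (Fin n)), (∀ v ∈ S, IsRatVec v) ∧ Submodule.span ℝ S = B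

/-- `v` is a `ℤ`-basis of the lattice `B ∩ ℤⁿ`. -/
def IsZBasisOf {n e : ℕ} (B : Submodule ℝ (EuclideanSpace ℝ (Fin n)))
    (v : Fin e → EuclideanSpace ℝ (Fin n)) : Prop :=
  (∀ i, v i ∈ B ∧ IsIntVec (v i)) ∧
    ∀ x : EuclideanSpace ℝ (Fin n), x ∈ B → IsIntVec x →
      ∃! c : Fin e → ℤ, x = ∑ i, (c i : ℝ) • v i

/-- Generalised determinant `√(det(ᵀM·M))` of a family of vectors, i.e. the norm
`‖v₁ ∧ ⋯ ∧ v_e‖` of their exterior product (square root of the Gram determinant). -/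
def gramDet {n e : ℕ} (v : Fin e → EuclideanSpace ℝ (Fin n)) : ℝ :=
  Real.sqrt (Matrix.det (Matrix.of fun i j => (inner ℝ (v i) (v j) : ℝ)))

/-- Height of a rational subspace: `√(det(ᵀM·M))` for `M` a matrix whose columns form a
`ℤ`-basis of `B ∩ ℤⁿ` (this value is independent of the chosen basis). -/
def height {n : ℕ} (B : Submodule ℝ (EuclideanSpace ℝ (Fin n))) : ℝ :=
  sSup {h : ℝ | ∃ (e : ℕ) (v : Fin e → EuclideanSpace ℝ (Fin n)), IsZBasisOf B v ∧ h = gramDet v}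

/-- `ψ(X,Y)`, the sine of the angle between `X` and `Y`. -/
def psiVec {n : ℕ} (X Y : EuclideanSpace ℝ (Fin n)) : ℝ :=
  Real.sqrt (‖X‖ ^ 2 * ‖Y‖ ^ 2 - (inner ℝ X Y : ℝ) ^ 2) / (‖X‖ * ‖Y‖)

/-- `ψⱼ(A,B)`, the `j`-th canonical angle between the subspaces `A` and `B`. -/
def psiSub {n : ℕ} (j : ℕ) (A B : Submodule ℝ (EuclideanSpace ℝ (Fin n))) : ℝ :=
  sInf {l : ℝ | 0 ≤ l ∧ ∃ Aj : Submodule ℝ (EuclideanSpace ℝ (Fin n)), Aj ≤ A ∧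
    Module.finrank ℝ Aj = j ∧ ∀ X ∈ Aj, X ≠ 0 → ∃ Y ∈ B, Y ≠ 0 ∧ psiVec X Y ≤ l}

/-- `A` is `(e,j)`-irrational: `dim (A ∩ B) < j` for every rational subspace `B` of dim `e`. -/
def IsIrrational {n : ℕ} (e j : ℕ) (A : Submodule ℝ (EuclideanSpace ℝ (Fin n))) : Prop :=
  ∀ B : Submodule ℝ (EuclideanSpace ℝ (Fin n)), IsRationalSubspace B →
    Module.finrank ℝ B = e → Module.finrank ℝ ↥(A ⊓ B) < j

/-- The exponent of approximation `μₙ(A|e)ⱼ ∈ [0,∞]`. -/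
def mu {n : ℕ} (e j : ℕ) (A : Submodule ℝ (EuclideanSpace ℝ (Fin n))) : ℝ≥0∞ :=
  sSup {x : ℝ≥0∞ | ∃ β : ℝ, 0 < β ∧ x = ENNReal.ofReal β ∧
    {B : Submodule ℝ (EuclideanSpace ℝ (Fin n)) | IsRationalSubspace B ∧
      Module.finrank ℝ B = e ∧ psiSub j A B ≤ height B ^ (-β)}.Infinite}

/-- `μ̂ₙ(d|e)ⱼ = inf {μₙ(A|e)ⱼ : A ∈ 𝔍ₙ(d,e)ⱼ}`. -/
def muHat (n d e j : ℕ) : ℝ≥0∞ :=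
  sInf (mu e j '' {A : Submodule ℝ (EuclideanSpace ℝ (Fin n)) |
    Module.finrank ℝ A = d ∧ IsIrrational e j A})

/-!
Write `T = θ^⌊α^N⌋` and `F = F_N`. If `∑ rⱼ Xⱼ` is integral, the top block gives `a = T r ∈ ℤ^ℓ`
and the bottom block gives `T ∣ F a`, hence `T ∣ det F · a` (multiply by the adjugate); so `r` is
integral as soon as `θ ∤ det F`. Since `α > 2`, the exponents `⌊α^N⌋ - ⌊α^k⌋` are positive for
`k < N`, so `F_N ≡ E_N (mod θ)`; and `det E_N` is nonzero by diagonal dominance and of absolute value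
at most `ℓ!(2ℓ+1)^ℓ < θ` by the Leibniz formula. Two `ℤ`-bases of the same lattice differ by a
unimodular matrix, so the height is the Gram determinant of the `Xⱼ`. Their Gram matrix is
`T²·1 + FᵀF`, whose eigenvalues are all at least `T²`, so its determinant is at least `T^{2ℓ}`.
-/

open Matrix

theorem Matrix.card_eq_of_mul_eq_one {R m n : Type*} [CommRing R] [Nontrivial R]
    [Fintype m] [Fintype n] [DecidableEq m] [DecidableEq n]
    {C : Matrix m n R} {D : Matrix n m R} (hCD : C * D = 1) (hDC : D * C = 1) :
    Fintype.card m = Fintype.card n := by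
  let φ : (n → R) ≃ₗ[R] (m → R) := LinearEquiv.ofLinearMap (f := toLin' C) (g := toLin' D)
    (by rw [← toLin'_mul, hCD, toLin'_one]) (by rw [← toLin'_mul, hDC, toLin'_one])
  simpa only [Module.finrank_fintype_fun_eq_card] using φ.finrank_eq.symm

theorem Matrix.gram_sum_smul {E m n : Type*} [NormedAddCommGroup E] [InnerProductSpace ℝ E]
    [Fintype n] (D : Matrix m n ℝ) (v : n → E) :
    gram ℝ (fun i => ∑ k, D i k • v k) = D * gram ℝ v * Dᵀ := by
  ext i j
  simp only [gram_apply, mul_apply, transpose_apply, sum_inner, inner_sum, real_inner_smul_left,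
    real_inner_smul_right, Finset.sum_mul]
  exact Finset.sum_congr rfl fun _ _ => Finset.sum_congr rfl fun _ _ => by ring

theorem Matrix.dvd_of_dvd_mulVec {R n : Type*} [CommRing R] [Fintype n] [DecidableEq n]
    {t : R} {F : Matrix n n R} (hF : IsCoprime t F.det) {a : n → R}
    (ha : ∀ i, t ∣ (F *ᵥ a) i) (j : n) : t ∣ a j := by
  have hadj : F.det * a j = (F.adjugate *ᵥ (F *ᵥ a)) j := by
    rw [mulVec_mulVec, adjugate_mul, smul_mulVec, one_mulVec, Pi.smul_apply, smul_eq_mul]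
  refine hF.dvd_of_dvd_mul_left ?_
  rw [hadj]
  exact Finset.dvd_sum fun k _ => (ha k).mul_left _

theorem Matrix.det_modEq {n : Type*} [Fintype n] [DecidableEq n] {m : ℕ}
    {A B : Matrix n n ℤ} (h : ∀ i j, A i j ≡ B i j [ZMOD m]) : A.det ≡ B.det [ZMOD m] := by
  rw [← ZMod.intCast_eq_intCast_iff, ← eq_intCast (Int.castRingHom (ZMod m)),
    ← eq_intCast (Int.castRingHom (ZMod m)), RingHom.map_det, RingHom.map_det]
  congr 1
  ext i j
  exact (ZMod.intCast_eq_intCast_iff _ _ _).mpr (h i j)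

theorem Matrix.det_ne_zero_of_abs_offDiag_le {n : Type*} [Fintype n] [DecidableEq n]
    {A : Matrix n n ℤ} {c : ℤ} (hc : 0 < c) (hoff : ∀ i j, i ≠ j → |A i j| ≤ c)
    (hdiag : ∀ i, c * Fintype.card n ≤ |A i i|) : A.det ≠ 0 := by
  have hR : (A.map (Int.cast : ℤ → ℝ)).det ≠ 0 := by
    refine det_ne_zero_of_sum_row_lt_diag fun k => ?_
    have hoffsum : ∑ j ∈ Finset.univ.erase k, |A k j| ≤ ∑ _j ∈ Finset.univ.erase k, c :=
      Finset.sum_le_sum fun j hj => hoff k j (Finset.ne_of_mem_erase hj).symm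
    have hcard : ((Finset.univ.erase k).card : ℤ) + 1 = Fintype.card n := by
      rw [Finset.card_erase_of_mem (Finset.mem_univ k), Finset.card_univ,
        Nat.cast_sub (Fintype.card_pos_iff.mpr ⟨k⟩), Nat.cast_one, sub_add_cancel]
    have hlt : ∑ j ∈ Finset.univ.erase k, |A k j| < |A k k| := by
      rw [Finset.sum_const, nsmul_eq_mul] at hoffsum
      nlinarith [hdiag k]
    simpa only [map_apply, Real.norm_eq_abs, ← Int.cast_abs, ← Int.cast_sum, Int.cast_lt]
      using hlt
  contrapose! hR
  simpa [hR] using ((Int.castRingHom ℝ).map_det A).symm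

theorem Matrix.PosSemidef.pow_card_le_det_smul_one_add {n : Type*} [Fintype n] [DecidableEq n]
    {S : Matrix n n ℝ} (hS : S.PosSemidef) {c : ℝ} (hc : 0 ≤ c) :
    c ^ Fintype.card n ≤ (c • 1 + S).det := by
  have hG : (c • 1 + S).IsHermitian :=
    (isHermitian_one.smul (IsSelfAdjoint.all c)).add hS.isHermitian
  have heig : ∀ i, c ≤ hG.eigenvalues i := fun i => by
    set u : n → ℝ := ⇑(hG.eigenvectorBasis i)
    have hu : star u ⬝ᵥ u = 1 := by
      rw [dotProduct_comm, ← EuclideanSpace.inner_eq_star_dotProduct, real_inner_self_eq_norm_sq,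
        hG.eigenvectorBasis.orthonormal.1 i, one_pow]
    have := hS.dotProduct_mulVec_nonneg u
    rw [hG.eigenvalues_eq, add_mulVec, smul_mulVec, one_mulVec, dotProduct_add,
      dotProduct_smul, hu]
    simpa using this
  rw [hG.det_eq_prod_eigenvalues]
  calc c ^ Fintype.card n = ∏ _i : n, c := by simp
    _ ≤ ∏ i, hG.eigenvalues i := Finset.prod_le_prod (fun _ _ => hc) fun i _ => heig i
    _ = _ := by simp

section ZBasis

variable {n ℓ e : ℕ} {B : Submodule ℝ (EuclideanSpace ℝ (Fin n))}
  {X : Fin ℓ → EuclideanSpace ℝ (Fin n)} {v : Fin e → EuclideanSpace ℝ (Fin n)}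

theorem IsZBasisOf.mul_eq_one (hX : IsZBasisOf B X) {C : Matrix (Fin ℓ) (Fin e) ℤ}
    {D : Matrix (Fin e) (Fin ℓ) ℤ} (hC : ∀ j, X j = ∑ i, (C j i : ℝ) • v i)
    (hD : ∀ i, v i = ∑ k, (D i k : ℝ) • X k) : C * D = 1 := by
  have hXj : ∀ j, X j = ∑ k, (((C * D) j k : ℤ) : ℝ) • X k := fun j => by
    simp only [hC j, hD, Finset.smul_sum, smul_smul, mul_apply, Int.cast_sum, Int.cast_mul,
      Finset.sum_smul]
    exact Finset.sum_comm
  have hXj' : ∀ j, X j = ∑ k, (((1 : Matrix (Fin ℓ) (Fin ℓ) ℤ) j k : ℤ) : ℝ) • X k := fun j => by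
    simp [one_apply]
  ext j k
  exact congrFun ((hX.2 _ (hX.1 j).1 (hX.1 j).2).unique (hXj j) (hXj' j)) k

theorem IsZBasisOf.gramDet_eq (hX : IsZBasisOf B X) (hv : IsZBasisOf B v) :
    gramDet v = gramDet X := by
  choose D hD using fun i => (hX.2 (v i) (hv.1 i).1 (hv.1 i).2).exists
  choose C hC using fun j => (hv.2 (X j) (hX.1 j).1 (hX.1 j).2).exists
  have hCD : of C * of D = 1 := hX.mul_eq_one hC hD
  have hDC : of D * of C = 1 := hv.mul_eq_one hD hC
  obtain rfl : e = ℓ := by simpa using card_eq_of_mul_eq_one hDC hCD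
  have hD2 : ((of D).det : ℝ) * (of D).det = 1 := by
    exact_mod_cast Int.isUnit_mul_self (IsUnit.of_mul_eq_one _ (by
      rw [← det_mul, hDC, det_one]))
  have hgram : gram ℝ v = (of D).map (Int.cast : ℤ → ℝ) * gram ℝ X *
      ((of D).map (Int.cast : ℤ → ℝ))ᵀ := by
    rw [← gram_sum_smul]
    exact congrArg _ (funext hD)
  have hdet : ((of D).map (Int.cast : ℤ → ℝ)).det = (of D).det :=
    ((Int.castRingHom ℝ).map_det _).symm
  change √(gram ℝ v).det = √(gram ℝ X).det
  rw [hgram, det_mul, det_mul, det_transpose, hdet, mul_right_comm, hD2, one_mul]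

theorem height_eq_gramDet (hX : IsZBasisOf B X) : height B = gramDet X := by
  have : {h : ℝ | ∃ (e : ℕ) (v : Fin e → EuclideanSpace ℝ (Fin n)),
      IsZBasisOf B v ∧ h = gramDet v} = {gramDet X} := by
    ext h
    constructor
    · rintro ⟨e, v, hv, rfl⟩
      exact hX.gramDet_eq hv
    · rintro rfl
      exact ⟨ℓ, X, hX, rfl⟩
  rw [height, this, csSup_singleton]

end ZBasis

section BlockColumn

variable {n ℓ : ℕ} (e : Fin ℓ ⊕ Fin ℓ ≃ Fin n) (T : ℤ) (F : Matrix (Fin ℓ) (Fin ℓ) ℤ)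

def blockColumn (j : Fin ℓ) : EuclideanSpace ℝ (Fin n) :=
  WithLp.toLp 2 fun i => ((fromRows (T • 1 : Matrix (Fin ℓ) (Fin ℓ) ℤ) F (e.symm i) j : ℤ) : ℝ)

@[simp]
theorem blockColumn_apply_inl (i j : Fin ℓ) :
    blockColumn e T F j (e (Sum.inl i)) = if i = j then (T : ℝ) else 0 := by
  split_ifs with h <;> simp [blockColumn, Matrix.intCast_apply, h]

@[simp]
theorem blockColumn_apply_inr (i j : Fin ℓ) :
    blockColumn e T F j (e (Sum.inr i)) = F i j := by
  simp [blockColumn]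

theorem isIntVec_blockColumn (j : Fin ℓ) : IsIntVec (blockColumn e T F j) :=
  fun _ => ⟨_, rfl⟩

theorem sum_smul_blockColumn_apply_inl (r : Fin ℓ → ℝ) (i : Fin ℓ) :
    (∑ j, r j • blockColumn e T F j) (e (Sum.inl i)) = r i * T := by
  simp [WithLp.ofLp_sum]

theorem sum_smul_blockColumn_apply_inr (r : Fin ℓ → ℝ) (i : Fin ℓ) :
    (∑ j, r j • blockColumn e T F j) (e (Sum.inr i)) = ∑ j, (F i j : ℝ) * r j := by
  simp [WithLp.ofLp_sum, mul_comm]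

theorem isZBasisOf_blockColumn (hT : T ≠ 0) (hF : IsCoprime T F.det) :
    IsZBasisOf (Submodule.span ℝ (Set.range (blockColumn e T F))) (blockColumn e T F) := by
  refine ⟨fun j => ⟨Submodule.subset_span ⟨j, rfl⟩, isIntVec_blockColumn e T F j⟩,
    fun x hx hxint => ?_⟩
  obtain ⟨r, rfl⟩ := (Submodule.mem_span_range_iff_exists_fun ℝ).mp hx
  choose z hz using hxint
  have htop : ∀ i, r i * T = z (e (Sum.inl i)) := fun i => by
    rw [← hz, sum_smul_blockColumn_apply_inl]
  have hdvd : ∀ i, T ∣ (F *ᵥ fun j => z (e (Sum.inl j))) i := fun i => by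
    refine ⟨z (e (Sum.inr i)), Int.cast_injective (α := ℝ) ?_⟩
    simp only [mulVec, dotProduct, Int.cast_sum, Int.cast_mul, ← htop, ← hz,
      sum_smul_blockColumn_apply_inr, Finset.mul_sum]
    exact Finset.sum_congr rfl fun j _ => by ring
  have hr : ∀ i, r i = (z (e (Sum.inl i)) / T : ℤ) := fun i => by
    rw [Int.cast_div (dvd_of_dvd_mulVec hF hdvd i) (by exact_mod_cast hT), ← htop,
      mul_div_cancel_right₀ _ (by exact_mod_cast hT)]
  refine ⟨fun i => z (e (Sum.inl i)) / T, by simp only [hr], fun c hc => funext fun i => ?_⟩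
  have := sum_smul_blockColumn_apply_inl e T F r i
  rw [hc, sum_smul_blockColumn_apply_inl, hr] at this
  exact_mod_cast mul_right_cancel₀ (Int.cast_ne_zero.mpr hT) this

theorem gram_blockColumn :
    gram ℝ (blockColumn e T F) =
      (T : ℝ) ^ 2 • 1 + (F.map (Int.cast : ℤ → ℝ))ᵀ * F.map (Int.cast : ℤ → ℝ) := by
  ext j k
  rw [gram_apply, PiLp.inner_apply, ← e.sum_comp, Fintype.sum_sum_type]
  simp [mul_apply, one_apply, sq, mul_comm, eq_comm]

theorem abs_pow_le_gramDet_blockColumn : |(T : ℝ)| ^ ℓ ≤ gramDet (blockColumn e T F) := by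
  have hdet := (posSemidef_conjTranspose_mul_self (F.map (Int.cast : ℤ → ℝ))
    ).pow_card_le_det_smul_one_add (sq_nonneg (T : ℝ))
  rw [Fintype.card_fin, conjTranspose_eq_transpose_of_trivial, ← gram_blockColumn e] at hdet
  refine Real.le_sqrt_of_sq_le ?_
  rwa [← pow_mul, mul_comm, pow_mul, sq_abs]

end BlockColumn

theorem Nat.floor_pow_lt_floor_pow {α : ℝ} (hα : 2 ≤ α) {k N : ℕ} (hkN : k < N) :
    ⌊α ^ k⌋₊ < ⌊α ^ N⌋₊ := by
  have hk : 1 ≤ α ^ k := one_le_pow₀ (by linarith)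
  have hstep : α ^ k + 1 ≤ α ^ N :=
    calc α ^ k + 1 ≤ α * α ^ k := by nlinarith
      _ = α ^ (k + 1) := (_root_.pow_succ' α k).symm
      _ ≤ α ^ N := pow_le_pow_right₀ (by linarith) hkN
  calc ⌊α ^ k⌋₊ < ⌊α ^ k⌋₊ + 1 := Nat.lt_succ_self _
    _ = ⌊α ^ k + 1⌋₊ := (Nat.floor_add_one (by positivity)).symm
    _ ≤ ⌊α ^ N⌋₊ := Nat.floor_mono hstep

theorem sum_mul_pow_sub_floor_modEq {α : ℝ} (hα : 2 ≤ α) (θ N : ℕ) (a : ℕ → ℕ) :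
    ∑ k ∈ Finset.range (N + 1), a k * θ ^ (⌊α ^ N⌋₊ - ⌊α ^ k⌋₊) ≡ a N [MOD θ] := by
  rw [Finset.sum_range_succ, Nat.sub_self, pow_zero, mul_one]
  have hdvd : θ ∣ ∑ k ∈ Finset.range N, a k * θ ^ (⌊α ^ N⌋₊ - ⌊α ^ k⌋₊) :=
    Finset.dvd_sum fun k hk => (dvd_pow_self θ (Nat.sub_ne_zero_of_lt
      (Nat.floor_pow_lt_floor_pow hα (Finset.mem_range.mp hk)))).mul_left _
  simpa using (Nat.modEq_zero_iff_dvd.mpr hdvd).add_right (a N)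

theorem not_dvd_det_of_factorial_mul_pow_lt {ℓ θ : ℕ}
    (hθ : (ℓ.factorial : ℝ) * (2 * ℓ + 1) ^ ℓ < θ) {A : Matrix (Fin ℓ) (Fin ℓ) ℕ}
    (hA : ∀ i j, (i ≠ j → A i j = 1 ∨ A i j = 2) ∧ (i = j → A i j = 2 * ℓ ∨ A i j = 2 * ℓ + 1)) :
    ¬ (θ : ℤ) ∣ (A.map (Nat.cast : ℕ → ℤ)).det := by
  have habs : ∀ i j, |(A i j : ℤ)| = A i j := fun i j => abs_of_nonneg (Nat.cast_nonneg _)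
  have hoff : ∀ i j, i ≠ j → |(A i j : ℤ)| ≤ 2 := fun i j hij => by
    rw [habs]; rcases (hA i j).1 hij with h | h <;> omega
  have hdiag : ∀ i, 2 * (ℓ : ℤ) ≤ |(A i i : ℤ)| := fun i => by
    rw [habs]; rcases (hA i i).2 rfl with h | h <;> omega
  have hle : ∀ i j, |(A i j : ℤ)| ≤ 2 * ℓ + 1 := fun i j => by
    rw [habs]
    by_cases hij : i = j
    · rcases (hA i j).2 hij with h | h <;> omega
    · rcases (hA i j).1 hij with h | h <;> omega
  have h0 : (A.map (Nat.cast : ℕ → ℤ)).det ≠ 0 :=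
    det_ne_zero_of_abs_offDiag_le two_pos hoff (by simpa using hdiag)
  have hlt : |(A.map (Nat.cast : ℕ → ℤ)).det| < θ := by
    refine (det_le (abv := AbsoluteValue.abs) hle).trans_lt ?_
    simpa using (by exact_mod_cast hθ : (ℓ.factorial : ℤ) * (2 * ℓ + 1) ^ ℓ < θ)
  exact fun hdvd => (Int.le_of_dvd (abs_pos.mpr h0) ((dvd_abs _ _).mpr hdvd)).not_gt hlt

/-- **Claim 4.4.** The columns `X_N` form a `ℤ`-basis of `B_N ∩ ℤ^{2ℓ}`, so that
`H(B_N) = ‖X_N⁽¹⁾ ∧ ⋯ ∧ X_N⁽ℓ⁾‖`; moreover `H(B_N) ≥ c̃·(θ^⌊α^N⌋)^ℓ` for `N` large. -/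
theorem statement16
    (ℓ : ℕ) (α : ℝ) (hα : 2 < α) (θ : ℕ) (hθp : θ.Prime)
    (hθ : (Nat.factorial ℓ : ℝ) * (2 * (ℓ : ℝ) + 1) ^ ℓ < (θ : ℝ))
    (E : Fin ℓ → Fin ℓ → ℕ → ℕ)
    (hE : ∀ i j k, (i ≠ j → E i j k = 1 ∨ E i j k = 2) ∧
      (i = j → E i j k = 2 * ℓ ∨ E i j k = 2 * ℓ + 1))
    (f : ℕ → Fin ℓ → Fin ℓ → ℕ)
    (hf : ∀ N i j, f N i j =
      ∑ k ∈ Finset.range (N + 1), E i j k * θ ^ (Nat.floor (α ^ N) - Nat.floor (α ^ k)))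
    (X : ℕ → Fin ℓ → EuclideanSpace ℝ (Fin (2 * ℓ)))
    (hX : ∀ N j i, X N j i = if h : (i : ℕ) < ℓ then
        (if (⟨i, h⟩ : Fin ℓ) = j then ((θ : ℝ) ^ Nat.floor (α ^ N)) else 0)
      else (f N ⟨(i : ℕ) - ℓ, by have := i.isLt; omega⟩ j : ℝ))
    (B : ℕ → Submodule ℝ (EuclideanSpace ℝ (Fin (2 * ℓ))))
    (hB : ∀ N, B N = Submodule.span ℝ (Set.range (X N)))
    : (∀ N ≥ 1, IsZBasisOf (B N) (X N) ∧ height (B N) = gramDet (X N)) ∧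
      ∃ c > 0, ∃ N₀ : ℕ, ∀ N ≥ N₀, c * ((θ : ℝ) ^ Nat.floor (α ^ N)) ^ ℓ ≤ height (B N) := by
  let e : Fin ℓ ⊕ Fin ℓ ≃ Fin (2 * ℓ) := finSumFinEquiv.trans (finCongr (two_mul ℓ).symm)
  let T N : ℤ := (θ : ℤ) ^ ⌊α ^ N⌋₊
  let F N : Matrix (Fin ℓ) (Fin ℓ) ℤ := of fun i j => (f N i j : ℤ)
  have hXF : ∀ N, X N = blockColumn e (T N) (F N) := fun N => by
    funext j
    ext i
    obtain ⟨k | k, rfl⟩ := e.surjective i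
    · rw [blockColumn_apply_inl, hX, dif_pos (by simp [e])]
      simp [e, T, Fin.ext_iff]
    · rw [blockColumn_apply_inr, hX, dif_neg (by simp [e])]
      simp [e, F]
  have hcop : ∀ N, IsCoprime (T N) (F N).det := fun N => by
    have hF : (F N).det ≡ (of fun i j => (E i j N : ℤ)).det [ZMOD θ] :=
      det_modEq fun i j => Int.natCast_modEq_iff.mpr (by
        simpa [hf] using sum_mul_pow_sub_floor_modEq hα.le θ N (E i j))
    refine IsCoprime.pow_left ((Nat.prime_iff_prime_int.mp hθp).coprime_iff_not_dvd.mpr ?_)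
    rw [hF.dvd_iff]
    exact not_dvd_det_of_factorial_mul_pow_lt hθ fun i j => hE i j N
  have hbasis : ∀ N, IsZBasisOf (B N) (X N) := fun N => by
    rw [hB, hXF]
    exact isZBasisOf_blockColumn e _ _ (pow_ne_zero _ (by exact_mod_cast hθp.ne_zero)) (hcop N)
  refine ⟨fun N _ => ⟨hbasis N, height_eq_gramDet (hbasis N)⟩, 1, one_pos, 0, fun N _ => ?_⟩
  rw [one_mul, height_eq_gramDet (hbasis N), hXF]
  simpa [T] using abs_pow_le_gramDet_blockColumn e (T N) (F N)

end
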